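/- Let f : (0,1) → ℝ be an increasing function with ∫₀¹ f(t)/t dt < ∞ and let μ be a Borel measure on ℝⁿ finite on bounded sets. For any fixed θ ∈ S^{n-1}, for μ-almost every x ∈ ℝⁿ, liminf_{r↓0} μ(B(x,r) \ H(x,θ)) / (f(r)·μ(B(x,r))) ≥ 1. -/

import Mathlib

/-
Fix a dyadic scale `ρ`, cut space into lattice cubes of diameter at most `ρ`, and let `S` be the
part of one cube where the half-ball estimate `f(r) μ(B(x,r)) ≤ μ(B(x,r) \ H(x,θ))` fails for some
`r ∈ [ρ, 2ρ]`. Each `x ∈ S` then sees at most `f(2ρ) μ(B(x₀,3ρ))` of `S` on its far side of the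
hyperplane through `x` orthogonal to `θ`; exhausting `S` from the top in direction `θ` gives
`μ S ≤ 2 f(2ρ) μ(B(x₀,3ρ))`. The enlarged balls overlap boundedly, so the exceptional set at scale
`2⁻ᵏ` inside `B(0,R)` has measure `≲ f(2⁻ᵏ) μ(B(0,R+2))`. Since `f` is increasing,
`∑ₖ f(2⁻ᵏ) ≤ 2 ∫₀¹ f(t)/t dt < ∞`, and Borel–Cantelli concludes.
-/

open Set MeasureTheory Metric Filter
open scoped ENNReal RealInnerProductSpace Topology

theorem measure_le_two_mul_of_forall_measure_sublevel_le {α : Type*} [MeasurableSpace α]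
    (μ : Measure α) {S : Set α} {φ : α → ℝ} (hφ : BddAbove (φ '' S)) {T : ℝ≥0∞}
    (h : ∀ x ∈ S, μ (S ∩ {y | φ y ≤ φ x}) ≤ T) : μ S ≤ 2 * T := by
  rcases S.eq_empty_or_nonempty with rfl | hS
  · simp
  -- Below `sup φ`, `S` is exhausted by the sublevel sets of points of `S` along which `φ`
  -- increases to the supremum; at `sup φ`, by the sublevel set of a point attaining it.
  set m := sSup (φ '' S)
  have below : μ (S ∩ {y | φ y < m}) ≤ T := by
    obtain ⟨u, hu_mono, hu_lim, hu_mem⟩ := exists_seq_tendsto_sSup (hS.image φ) hφ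
    have hcover : S ∩ {y | φ y < m} ⊆ ⋃ j, S ∩ {y | φ y ≤ u j} := fun y ⟨hyS, hym⟩ ↦
      have ⟨j, hj⟩ := (hu_lim.eventually (eventually_gt_nhds hym)).exists
      mem_iUnion.2 ⟨j, hyS, hj.le⟩
    have hmono : Monotone fun j ↦ S ∩ {y | φ y ≤ u j} := fun i j hij ↦
      inter_subset_inter_right _ fun y hy ↦ le_trans hy (hu_mono hij)
    refine (measure_mono hcover).trans ?_
    rw [hmono.measure_iUnion]
    refine iSup_le fun j ↦ ?_
    obtain ⟨x, hxS, hx⟩ := hu_mem j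
    exact hx ▸ h x hxS
  have attained : μ (S ∩ {y | m ≤ φ y}) ≤ T := by
    rcases (S ∩ {y | m ≤ φ y}).eq_empty_or_nonempty with he | ⟨x, hxS, hxm⟩
    · simp [he]
    refine (measure_mono fun y hy ↦ ?_).trans (h x hxS)
    exact ⟨hy.1, (le_csSup hφ (mem_image_of_mem φ hy.1)).trans hxm⟩
  calc μ S ≤ μ (S ∩ {y | φ y < m}) + μ (S ∩ {y | m ≤ φ y}) := by
        refine (measure_mono fun y hy ↦ ?_).trans (measure_union_le _ _)
        rcases lt_or_ge (φ y) m with h' | h'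
        exacts [Or.inl ⟨hy, h'⟩, Or.inr ⟨hy, h'⟩]
    _ ≤ 2 * T := by rw [two_mul]; exact add_le_add below attained

theorem tsum_measure_biUnion_add_le {X G : Type*} [MeasurableSpace X] [AddGroup G]
    (μ : Measure X) {Q : G → Set X} (hQ : ∀ g, MeasurableSet (Q g))
    (hdisj : Pairwise (Function.onFun Disjoint Q)) (D : Finset G) :
    ∑' g, μ (⋃ d ∈ D, Q (g + d)) ≤ D.card * μ (⋃ g, Q g) :=
  calc ∑' g, μ (⋃ d ∈ D, Q (g + d)) ≤ ∑' g, ∑ d ∈ D, μ (Q (g + d)) :=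
        ENNReal.tsum_le_tsum fun g ↦ measure_biUnion_finset_le D _
    _ = ∑ d ∈ D, ∑' g, μ (Q (g + d)) := Summable.tsum_finsetSum fun _ _ ↦ ENNReal.summable
    _ = ∑ d ∈ D, ∑' g, μ (Q g) :=
        Finset.sum_congr rfl fun d _ ↦ (Equiv.addRight d).tsum_eq fun g ↦ μ (Q g)
    _ ≤ ∑ _d ∈ D, μ (⋃ g, Q g) :=
        Finset.sum_le_sum fun _ _ ↦ tsum_meas_le_meas_iUnion_of_disjoint μ hQ hdisj
    _ = D.card * μ (⋃ g, Q g) := by rw [Finset.sum_const, nsmul_eq_mul]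

theorem ae_forall_measure_closedBall_pos {X : Type*} [PseudoMetricSpace X] [MeasurableSpace X]
    [HereditarilyLindelofSpace X] (μ : Measure X) :
    ∀ᵐ x ∂μ, ∀ r : ℝ, 0 < r → 0 < μ (closedBall x r) := by
  filter_upwards [μ.support_mem_ae] with x hx r hr
  exact (μ.mem_support_iff_forall x).1 hx _ (closedBall_mem_nhds x hr)

theorem ofReal_le_two_mul_setLIntegral_div {g : ℝ → ℝ} (hg : MonotoneOn g (Ioo 0 1)) {a : ℝ}
    (ha : 0 < a) (ha1 : 2 * a ≤ 1) :
    ENNReal.ofReal (g a) ≤ 2 * ∫⁻ t in Ioo a (2 * a), ENNReal.ofReal (g t / t) := by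
  rcases le_or_gt (g a) 0 with hga | hga
  · simp [ENNReal.ofReal_of_nonpos hga]
  have hquot : ∀ t ∈ Ioo a (2 * a), g a / (2 * a) ≤ g t / t := fun t ht ↦ by
    have hgt : g a ≤ g t := hg ⟨ha, by linarith⟩ ⟨ha.trans ht.1, by linarith [ht.2]⟩ ht.1.le
    exact div_le_div₀ (hga.le.trans hgt) hgt (ha.trans ht.1) ht.2.le
  calc ENNReal.ofReal (g a)
      = 2 * ∫⁻ _t in Ioo a (2 * a), ENNReal.ofReal (g a / (2 * a)) := by
        rw [setLIntegral_const, Real.volume_Ioo, ← ENNReal.ofReal_mul (by positivity),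
          ← ENNReal.ofReal_ofNat 2, ← ENNReal.ofReal_mul (by norm_num)]
        congr 1
        field_simp
        ring
    _ ≤ 2 * ∫⁻ t in Ioo a (2 * a), ENNReal.ofReal (g t / t) := by
        gcongr 2 * ?_
        refine setLIntegral_mono' measurableSet_Ioo fun t ht ↦ ?_
        exact ENNReal.ofReal_le_ofReal (hquot t ht)

theorem tsum_ofReal_dyadic_ne_top {g : ℝ → ℝ} (hg : MonotoneOn g (Ioo 0 1))
    (hint : ∫⁻ t in Ioo (0 : ℝ) 1, ENNReal.ofReal (g t / t) < ⊤) :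
    ∑' k : ℕ, ENNReal.ofReal (g (2⁻¹ ^ (k + 1))) ≠ ⊤ := by
  set I : ℕ → Set ℝ := fun k ↦ Ioo (2⁻¹ ^ (k + 1)) (2⁻¹ ^ k)
  have hanti : Antitone fun k : ℕ ↦ (2⁻¹ : ℝ) ^ k :=
    fun i j hij ↦ pow_le_pow_of_le_one (by norm_num) (by norm_num) hij
  have hI_disj : Pairwise (Function.onFun Disjoint I) := hanti.pairwise_disjoint_on_Ioo_succ
  have hI_sub : (⋃ k, I k) ⊆ Ioo 0 1 := iUnion_subset fun k t ht ↦
    ⟨(pow_pos (by norm_num) _).trans ht.1, ht.2.trans_le (pow_le_one₀ (by norm_num) (by norm_num))⟩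
  have hterm : ∀ k : ℕ, ENNReal.ofReal (g (2⁻¹ ^ (k + 1))) ≤
      2 * ∫⁻ t in I k, ENNReal.ofReal (g t / t) := fun k ↦ by
    have h2 : (2⁻¹ : ℝ) ^ k = 2 * 2⁻¹ ^ (k + 1) := by rw [pow_succ]; ring
    simp only [I, h2]
    exact ofReal_le_two_mul_setLIntegral_div hg (by positivity)
      (by rw [← h2]; exact pow_le_one₀ (by norm_num) (by norm_num))
  refine (lt_of_le_of_lt (ENNReal.tsum_le_tsum hterm) ?_).ne
  rw [ENNReal.tsum_mul_left, ← lintegral_iUnion (fun _ ↦ measurableSet_Ioo) hI_disj]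
  exact ENNReal.mul_lt_top (by norm_num) ((lintegral_mono_set hI_sub).trans_lt hint)

theorem eventually_nhdsGT_zero_of_eventually_dyadic {P : ℝ → Prop}
    (h : ∀ᶠ k : ℕ in atTop, ∀ r ∈ Icc ((2⁻¹ : ℝ) ^ (k + 2)) (2⁻¹ ^ (k + 1)), P r) :
    ∀ᶠ r in 𝓝[>] 0, P r := by
  obtain ⟨K, hK⟩ := eventually_atTop.1 h
  have h2 : (0 : ℝ) < 2⁻¹ ∧ (2⁻¹ : ℝ) < 1 := by norm_num
  filter_upwards [Ioo_mem_nhdsGT (pow_pos h2.1 (K + 1))] with r hr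
  obtain ⟨m, hm_lo, hm_hi⟩ := exists_nat_pow_near_of_lt_one hr.1
    (hr.2.le.trans (pow_le_one₀ h2.1.le h2.2.le)) h2.1 h2.2
  have hKm : K + 1 < m + 1 := (pow_lt_pow_iff_right_of_lt_one₀ h2.1 h2.2).1 (hm_lo.trans hr.2)
  obtain ⟨k, rfl⟩ : ∃ k, m = k + 1 := ⟨m - 1, by omega⟩
  exact hK k (by omega) r ⟨hm_lo.le, hm_hi⟩

theorem setLIntegral_ofReal_max_self_div_lt_top {f : ℝ → ℝ}
    (hf : ∫⁻ t in Ioo (0 : ℝ) 1, ENNReal.ofReal (f t / t) < ⊤) :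
    ∫⁻ t in Ioo (0 : ℝ) 1, ENNReal.ofReal (max (f t) t / t) < ⊤ :=
  calc ∫⁻ t in Ioo (0 : ℝ) 1, ENNReal.ofReal (max (f t) t / t)
      ≤ ∫⁻ t in Ioo (0 : ℝ) 1, (ENNReal.ofReal (f t / t) + 1) :=
        setLIntegral_mono' measurableSet_Ioo fun t ht ↦ by
          rw [← max_div_div_right ht.1.le, div_self ht.1.ne', ENNReal.ofReal_max,
            ENNReal.ofReal_one]
          exact max_le le_self_add le_add_self
    _ = (∫⁻ t in Ioo (0 : ℝ) 1, ENNReal.ofReal (f t / t)) + volume (Ioo (0 : ℝ) 1) := by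
        rw [lintegral_add_right _ measurable_const, setLIntegral_one]
    _ < ⊤ := ENNReal.add_lt_top.2 ⟨hf, measure_Ioo_lt_top⟩

namespace EuclideanSpace

variable {ι : Type*}

noncomputable def cubeIndex (s : ℝ) (y : EuclideanSpace ℝ ι) : ι → ℤ := fun i ↦ ⌊y i / s⌋

theorem measurable_cubeIndex (s : ℝ) : Measurable (cubeIndex (ι := ι) s) := by
  unfold cubeIndex; fun_prop

variable [Fintype ι]

theorem dist_le_of_cubeIndex_eq {s : ℝ} (hs : 0 < s) {y y' : EuclideanSpace ℝ ι}
    (h : cubeIndex s y = cubeIndex s y') : dist y y' ≤ √(Fintype.card ι) * s := by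
  have hcoord : ∀ i, dist (y i) (y' i) < s := fun i ↦ by
    have := Int.abs_sub_lt_one_of_floor_eq_floor (congrFun h i)
    rwa [← sub_div, abs_div, abs_of_pos hs, div_lt_one hs, ← Real.dist_eq] at this
  rw [EuclideanSpace.dist_eq, ← Real.sqrt_sq hs.le, ← Real.sqrt_mul (Nat.cast_nonneg _)]
  refine Real.sqrt_le_sqrt ?_
  calc ∑ i, dist (y i) (y' i) ^ 2 ≤ ∑ _i : ι, s ^ 2 :=
        Finset.sum_le_sum fun i _ ↦ pow_le_pow_left₀ dist_nonneg (hcoord i).le 2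
    _ = Fintype.card ι * s ^ 2 := by simp

theorem closedBall_subset_biUnion_cubeIndex [DecidableEq ι] {s : ℝ} (hs : 0 < s) (K : ℕ)
    (x : EuclideanSpace ℝ ι) :
    closedBall x (K * s) ⊆ ⋃ d ∈ Fintype.piFinset fun _ : ι ↦ Finset.Icc (-(K : ℤ)) K,
      cubeIndex s ⁻¹' {cubeIndex s x + d} := by
  intro y hy
  refine mem_iUnion₂.2 ⟨cubeIndex s y - cubeIndex s x, ?_, by simp⟩
  rw [Fintype.mem_piFinset]
  intro i
  have hyi : |y i / s - x i / s| ≤ K := by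
    rw [← sub_div, abs_div, abs_of_pos hs, div_le_iff₀ hs, ← Real.dist_eq]
    exact (PiLp.dist_apply_le y x i).trans (mem_closedBall.1 hy)
  obtain ⟨hyi_lo, hyi_hi⟩ := abs_le.1 hyi
  have hlo : -(K : ℤ) - 1 < ⌊y i / s⌋ - ⌊x i / s⌋ := (Int.cast_lt (R := ℝ)).1 <| by
    push_cast; linarith [Int.lt_floor_add_one (y i / s), Int.floor_le (x i / s)]
  have hhi : ⌊y i / s⌋ - ⌊x i / s⌋ < K + 1 := (Int.cast_lt (R := ℝ)).1 <| by
    push_cast; linarith [Int.floor_le (y i / s), Int.lt_floor_add_one (x i / s)]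
  simp only [cubeIndex, Pi.sub_apply, Finset.mem_Icc]
  omega

theorem measure_inter_cubeIndex_preimage_le [DecidableEq ι] (μ : Measure (EuclideanSpace ℝ ι))
    (θ : EuclideanSpace ℝ ι) {S : Set (EuclideanSpace ℝ ι)} {ρ s : ℝ} {c : ℝ≥0∞} {K : ℕ}
    (hs : 0 < s) (hsρ : √(Fintype.card ι) * s ≤ ρ) (hKs : K * s = 3 * ρ)
    (h : ∀ x ∈ S, μ (closedBall x ρ \ {y | 0 < ⟪y - x, θ⟫}) ≤ c * μ (closedBall x (2 * ρ)))
    (z : ι → ℤ) :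
    μ (S ∩ cubeIndex s ⁻¹' {z}) ≤ 2 * (c * μ (⋃ d ∈ Fintype.piFinset fun _ : ι ↦
      Finset.Icc (-(K : ℤ)) K, cubeIndex s ⁻¹' {z + d} ∩ cthickening (3 * ρ) S)) := by
  rcases (S ∩ cubeIndex s ⁻¹' {z}).eq_empty_or_nonempty with he | ⟨x₀, hx₀S, hx₀z⟩
  · simp [he]
  have hdiam {y y' : EuclideanSpace ℝ ι} (hyy' : cubeIndex s y = cubeIndex s y') :
      dist y y' ≤ ρ :=
    (dist_le_of_cubeIndex_eq hs hyy').trans hsρ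
  have hbdd : BddAbove ((fun y ↦ ⟪y, θ⟫) '' (S ∩ cubeIndex s ⁻¹' {z})) :=
    ((isCompact_closedBall x₀ ρ).bddAbove_image (by fun_prop)).mono
      (image_mono fun y hy ↦ hdiam (hy.2.trans hx₀z.symm))
  refine measure_le_two_mul_of_forall_measure_sublevel_le μ hbdd fun x hx ↦ ?_
  have hball : closedBall x (2 * ρ) ⊆ ⋃ d ∈ Fintype.piFinset fun _ : ι ↦
      Finset.Icc (-(K : ℤ)) K, cubeIndex s ⁻¹' {z + d} ∩ cthickening (3 * ρ) S := by
    intro y hy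
    have hyx₀ : y ∈ closedBall x₀ (3 * ρ) := mem_closedBall.2 (by
      linarith [dist_triangle y x x₀, mem_closedBall.1 hy, hdiam (hx.2.trans hx₀z.symm)])
    obtain ⟨d, hd, hyd⟩ :=
      mem_iUnion₂.1 (closedBall_subset_biUnion_cubeIndex hs K x₀ (hKs ▸ hyx₀))
    rw [mem_preimage, mem_singleton_iff.1 hx₀z] at hyd
    exact mem_iUnion₂.2 ⟨d, hd, hyd, closedBall_subset_cthickening hx₀S _ hyx₀⟩
  calc μ (S ∩ cubeIndex s ⁻¹' {z} ∩ {y | ⟪y, θ⟫ ≤ ⟪x, θ⟫})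
      ≤ μ (closedBall x ρ \ {y | 0 < ⟪y - x, θ⟫}) := by
        refine measure_mono fun y hy ↦ ⟨hdiam (hy.1.2.trans hx.2.symm), ?_⟩
        simpa [inner_sub_left] using hy.2
    _ ≤ c * μ (closedBall x (2 * ρ)) := h x hx.1
    _ ≤ _ := by gcongr

theorem measure_le_of_forall_measure_halfBall_le (μ : Measure (EuclideanSpace ℝ ι))
    (θ : EuclideanSpace ℝ ι) {S : Set (EuclideanSpace ℝ ι)} {ρ : ℝ} (hρ : 0 < ρ) {c : ℝ≥0∞}
    (h : ∀ x ∈ S, μ (closedBall x ρ \ {y | 0 < ⟪y - x, θ⟫}) ≤ c * μ (closedBall x (2 * ρ))) :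
    μ S ≤ 2 * (6 * Fintype.card ι + 7) ^ Fintype.card ι * c * μ (cthickening (3 * ρ) S) := by
  classical
  -- Cubes of side `s = ρ / (n + 1)` have diameter at most `ρ`, and a ball of radius `3ρ = K s`
  -- meets only the cubes whose index is within `K` of its centre's in every coordinate.
  set n := Fintype.card ι
  set s := ρ / (n + 1)
  set K : ℕ := 3 * (n + 1)
  have hs : 0 < s := by positivity
  have hsρ : √(n : ℝ) * s ≤ ρ :=
    calc √(n : ℝ) * s ≤ (n + 1) * s := by
          gcongr; exact Real.sqrt_le_iff.2 ⟨by positivity, by nlinarith⟩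
      _ = ρ := by simp only [s]; field_simp
  have hKs : (K : ℝ) * s = 3 * ρ := by simp only [K, s]; push_cast; field_simp
  set D := Fintype.piFinset fun _ : ι ↦ Finset.Icc (-(K : ℤ)) K
  have hD : (D.card : ℝ≥0∞) = (6 * n + 7) ^ n := by
    simp only [D, Fintype.card_piFinset, Int.card_Icc, Finset.prod_const, Finset.card_univ]
    rw [show (K + 1 - -K : ℤ).toNat = 6 * n + 7 by omega]
    push_cast; rfl
  set A := cthickening (3 * ρ) S
  set Q : (ι → ℤ) → Set (EuclideanSpace ℝ ι) := fun z ↦ cubeIndex s ⁻¹' {z} ∩ A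
  have hQ_meas : ∀ z, MeasurableSet (Q z) := fun z ↦
    (measurable_cubeIndex s (measurableSet_singleton z)).inter isClosed_cthickening.measurableSet
  have hQ_disj : Pairwise (Function.onFun Disjoint Q) := fun z w hzw ↦
    ((disjoint_singleton.2 hzw).preimage _).mono inter_subset_left inter_subset_left
  have hcover : S ⊆ ⋃ z, S ∩ cubeIndex s ⁻¹' {z} := fun y hy ↦
    mem_iUnion.2 ⟨cubeIndex s y, hy, rfl⟩
  calc μ S ≤ ∑' z, μ (S ∩ cubeIndex s ⁻¹' {z}) :=
        (measure_mono hcover).trans (measure_iUnion_le _)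
    _ ≤ ∑' z, 2 * (c * μ (⋃ d ∈ D, Q (z + d))) :=
        ENNReal.tsum_le_tsum (measure_inter_cubeIndex_preimage_le μ θ hs hsρ hKs h)
    _ = 2 * c * ∑' z, μ (⋃ d ∈ D, Q (z + d)) := by
        rw [ENNReal.tsum_mul_left, ENNReal.tsum_mul_left, mul_assoc]
    _ ≤ 2 * c * (D.card * μ (⋃ z, Q z)) := by
        gcongr; exact tsum_measure_biUnion_add_le μ hQ_meas hQ_disj D
    _ ≤ 2 * c * (D.card * μ A) := by gcongr; exact iUnion_subset fun _ ↦ inter_subset_right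
    _ = _ := by rw [hD]; ring

def dyadicBadSet (μ : Measure (EuclideanSpace ℝ ι)) (θ : EuclideanSpace ℝ ι) (g : ℝ → ℝ)
    (k : ℕ) : Set (EuclideanSpace ℝ ι) :=
  {x | ∃ r ∈ Icc ((2⁻¹ : ℝ) ^ (k + 2)) (2⁻¹ ^ (k + 1)),
    μ (closedBall x r \ {y | 0 < ⟪y - x, θ⟫}) < ENNReal.ofReal (g r) * μ (closedBall x r)}

theorem measure_inter_dyadicBadSet_le (μ : Measure (EuclideanSpace ℝ ι))
    (θ : EuclideanSpace ℝ ι) {g : ℝ → ℝ} (hg : MonotoneOn g (Ioo 0 1))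
    (S : Set (EuclideanSpace ℝ ι)) (k : ℕ) :
    μ (S ∩ dyadicBadSet μ θ g k) ≤ 2 * (6 * Fintype.card ι + 7) ^ Fintype.card ι *
      ENNReal.ofReal (g (2⁻¹ ^ (k + 1))) * μ (cthickening 2 S) := by
  set ρ : ℝ := 2⁻¹ ^ (k + 2)
  have hρ : 0 < ρ := by positivity
  have h2ρ : 2 * ρ = 2⁻¹ ^ (k + 1) := by simp only [ρ]; rw [pow_succ _ (k + 1)]; ring
  have h2ρ_lt : 2 * ρ < 1 := h2ρ ▸ pow_lt_one₀ (by norm_num) (by norm_num) (by omega)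
  rw [← h2ρ]
  refine (measure_le_of_forall_measure_halfBall_le μ θ hρ
    (c := ENNReal.ofReal (g (2 * ρ))) fun x hx ↦ ?_).trans ?_
  · obtain ⟨r, hr, hlt⟩ := hx.2
    rw [← h2ρ] at hr
    calc μ (closedBall x ρ \ {y | 0 < ⟪y - x, θ⟫})
        ≤ μ (closedBall x r \ {y | 0 < ⟪y - x, θ⟫}) := by gcongr; exact hr.1
      _ ≤ ENNReal.ofReal (g r) * μ (closedBall x r) := hlt.le
      _ ≤ ENNReal.ofReal (g (2 * ρ)) * μ (closedBall x (2 * ρ)) := by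
          gcongr
          · exact hg ⟨hρ.trans_le hr.1, hr.2.trans_lt h2ρ_lt⟩ ⟨by positivity, h2ρ_lt⟩ hr.2
          · exact hr.2
  · gcongr
    refine (cthickening_mono ?_ _).trans (cthickening_subset_of_subset _ inter_subset_left)
    linarith

theorem ae_eventually_ofReal_mul_measure_closedBall_le (μ : Measure (EuclideanSpace ℝ ι))
    [IsFiniteMeasureOnCompacts μ] (θ : EuclideanSpace ℝ ι) {g : ℝ → ℝ}
    (hg : MonotoneOn g (Ioo 0 1)) (hsum : ∑' k : ℕ, ENNReal.ofReal (g (2⁻¹ ^ (k + 1))) ≠ ⊤) :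
    ∀ᵐ x ∂μ, ∀ᶠ r in 𝓝[>] 0,
      ENNReal.ofReal (g r) * μ (closedBall x r) ≤ μ (closedBall x r \ {y | 0 < ⟪y - x, θ⟫}) := by
  have hR : ∀ R : ℕ, ∀ᵐ x ∂μ, ∀ᶠ k in atTop, x ∉ closedBall 0 R ∩ dyadicBadSet μ θ g k := by
    intro R
    refine ae_eventually_notMem (ne_top_of_le_ne_top ?_
      (ENNReal.tsum_le_tsum (measure_inter_dyadicBadSet_le μ θ hg _)))
    rw [ENNReal.tsum_mul_right, ENNReal.tsum_mul_left]
    exact ENNReal.mul_ne_top (ENNReal.mul_ne_top (by finiteness) hsum)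
      (isBounded_closedBall.cthickening.measure_lt_top).ne
  filter_upwards [ae_all_iff.2 hR] with x hx
  obtain ⟨R, hxR⟩ := exists_nat_ge ‖x‖
  refine eventually_nhdsGT_zero_of_eventually_dyadic ((hx R).mono fun k hk r hr ↦ ?_)
  exact not_lt.1 fun hlt ↦ hk ⟨mem_closedBall_zero_iff.2 hxR, r, hr, hlt⟩

end EuclideanSpace

theorem stmt_4 (n : ℕ) (f : ℝ → ℝ)
    (hmono : MonotoneOn f (Ioo (0:ℝ) 1))
    (hf : (∫⁻ t in Ioo (0:ℝ) 1, ENNReal.ofReal (f t / t)) < ⊤)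
    (μ : Measure (EuclideanSpace ℝ (Fin n)))
    (hfin : ∀ s : Set (EuclideanSpace ℝ (Fin n)), Bornology.IsBounded s → μ s < ⊤)
    (θ : EuclideanSpace ℝ (Fin n)) :
    ∀ᵐ x ∂μ, 1 ≤ liminf
      (fun r : ℝ => μ (closedBall x r \ {y | 0 < ⟪y - x, θ⟫}) /
        (ENNReal.ofReal (f r) * μ (closedBall x r)))
      (𝓝[>] 0) := by
  have : IsFiniteMeasureOnCompacts μ := ⟨fun K hK ↦ hfin K hK.isBounded⟩
  -- `0 < g` on `(0, 1)` keeps the numerator below nonzero, avoiding `0 / 0 = 0` in `ℝ≥0∞`.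
  set g : ℝ → ℝ := fun t ↦ max (f t) t
  have hg : MonotoneOn g (Ioo 0 1) := hmono.max monotoneOn_id
  have hsum := tsum_ofReal_dyadic_ne_top hg (setLIntegral_ofReal_max_self_div_lt_top hf)
  filter_upwards [EuclideanSpace.ae_eventually_ofReal_mul_measure_closedBall_le μ θ hg hsum,
    ae_forall_measure_closedBall_pos μ] with x hx hpos
  refine le_liminf_of_le (by isBoundedDefault) ?_
  filter_upwards [hx, Ioo_mem_nhdsGT one_pos] with r hr hr01
  have hgr : 0 < g r := hr01.1.trans_le (le_max_right _ _)
  have hnum : μ (closedBall x r \ {y | 0 < ⟪y - x, θ⟫}) ≠ 0 :=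
    (lt_of_lt_of_le (ENNReal.mul_pos (ENNReal.ofReal_pos.2 hgr).ne' (hpos r hr01.1).ne') hr).ne'
  have hden : ENNReal.ofReal (f r) * μ (closedBall x r) ≠ ⊤ :=
    ENNReal.mul_ne_top ENNReal.ofReal_ne_top measure_closedBall_lt_top.ne
  rw [ENNReal.le_div_iff_mul_le (Or.inr hnum) (Or.inl hden), one_mul]
  exact le_trans (by gcongr; exact le_max_left _ _) hr
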